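/- arXiv:1604.00766 — 16 statements merged into one kernel-verified Lean document; each statement's English description precedes it below -/
import Mathlib

section
/- For all integers n ≥ 1, the bi-periodic Lucas number satisfies l_n = q_{n-1} + q_{n+1}, where q is the bi-periodic Fibonacci sequence. -/
theorem stmt_0 (a b : ℝ) (ha : a ≠ 0) (hb : b ≠ 0)
  (q : ℕ → ℝ) (hq0 : q 0 = 0) (hq1 : q 1 = 1)
  (hq : ∀ n : ℕ, q (n + 2) = if Even (n + 2) then a * q (n + 1) + q n else b * q (n + 1) + q n)
  (l : ℕ → ℝ) (hl0 : l 0 = 2) (hl1 : l 1 = a)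
  (hl : ∀ n : ℕ, l (n + 2) = if Odd (n + 2) then a * l (n + 1) + l n else b * l (n + 1) + l n) :
    ∀ n : ℕ, 1 ≤ n → l n = q (n - 1) + q (n + 1) := by
  have key : ∀ m : ℕ, l (m + 1) = q m + q (m + 2) ∧ l (m + 2) = q (m + 1) + q (m + 3) := by
    intro m
    induction m with
    | zero =>
      have h2 : q 2 = a * q 1 + q 0 := by simpa using hq 0
      have h3 : q 3 = b * q 2 + q 1 := by
        have := hq 1
        simp [Nat.even_iff] at this
        simpa using this
      have hl2 : l 2 = b * l 1 + l 0 := by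
        have := hl 0
        simp [Nat.odd_iff] at this
        simpa using this
      constructor
      · rw [hl1, hq0, h2, hq1, hq0]; ring
      · rw [hl2, h3, h2, hl1, hl0, hq1, hq0]; ring
    | succ m ih =>
      obtain ⟨ih1, ih2⟩ := ih
      refine ⟨ih2, ?_⟩
      have hlm : l (m + 3) = if Odd (m + 3) then a * l (m + 2) + l (m + 1)
          else b * l (m + 2) + l (m + 1) := hl (m + 1)
      have hq4 : q (m + 4) = if Even (m + 4) then a * q (m + 3) + q (m + 2)
          else b * q (m + 3) + q (m + 2) := hq (m + 2)
      have hq2 : q (m + 2) = if Even (m + 2) then a * q (m + 1) + q m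
          else b * q (m + 1) + q m := hq m
      rcases Nat.even_or_odd m with he | ho
      · have h1 : Odd (m + 3) := by simp [Nat.odd_iff, Nat.even_iff.mp he, Nat.add_mod]
        have h2 : Even (m + 4) := by simp [Nat.even_iff, Nat.even_iff.mp he, Nat.add_mod]
        have h3 : Even (m + 2) := by simp [Nat.even_iff, Nat.even_iff.mp he, Nat.add_mod]
        rw [if_pos h1] at hlm
        rw [if_pos h2] at hq4
        rw [if_pos h3] at hq2
        rw [hlm, ih1, ih2, hq4, hq2]; ring
      · have h1 : ¬ Odd (m + 3) := by simp [Nat.odd_iff, Nat.odd_iff.mp ho, Nat.add_mod]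
        have h2 : ¬ Even (m + 4) := by simp [Nat.even_iff, Nat.odd_iff.mp ho, Nat.add_mod]
        have h3 : ¬ Even (m + 2) := by simp [Nat.even_iff, Nat.odd_iff.mp ho, Nat.add_mod]
        rw [if_neg h1] at hlm
        rw [if_neg h2] at hq4
        rw [if_neg h3] at hq2
        rw [hlm, ih1, ih2, hq4, hq2]; ring
  intro n hn
  obtain ⟨m, rfl⟩ := Nat.exists_eq_add_of_le hn
  rw [Nat.add_comm 1 m]; simpa using (key m).1
end

section
/- For all integers n ≥ 1, (ab + 4)·q_n = l_{n+1} + l_{n-1}, where q is the bi-periodic Fibonacci sequence and l is the bi-periodic Lucas sequence. -/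
theorem stmt_1 (a b : ℝ) (ha : a ≠ 0) (hb : b ≠ 0)
  (q : ℕ → ℝ) (hq0 : q 0 = 0) (hq1 : q 1 = 1)
  (hq : ∀ n : ℕ, q (n + 2) = if Even (n + 2) then a * q (n + 1) + q n else b * q (n + 1) + q n)
  (l : ℕ → ℝ) (hl0 : l 0 = 2) (hl1 : l 1 = a)
  (hl : ∀ n : ℕ, l (n + 2) = if Odd (n + 2) then a * l (n + 1) + l n else b * l (n + 1) + l n) :
    ∀ n : ℕ, 1 ≤ n → (a * b + 4) * q n = l (n + 1) + l (n - 1) := by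
  have hl2 : l 2 = a * b + 2 := by
    have h := hl 0
    rw [if_neg (by decide)] at h
    rw [h, hl1, hl0]; ring
  have key : ∀ n : ℕ, (a * b + 4) * q (n + 1) = l (n + 2) + l n := by
    intro n
    induction n using Nat.twoStepInduction with
    | zero => rw [hq1, hl2, hl0]; ring
    | one =>
      have h3 : l 3 = a * l 2 + l 1 := by
        have h := hl 1; rwa [if_pos (by decide)] at h
      have hq2 : q 2 = a * q 1 + q 0 := by
        have h := hq 0; rwa [if_pos (by decide)] at h
      rw [hq2, h3, hl2, hl1, hq1, hq0]; ring
    | more n ih ih1 =>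
      have hq3 := hq (n + 1)
      have hl4 := hl (n + 2)
      have hlm := hl n
      rcases Nat.even_or_odd (n + 3) with he | ho
      · have h1 : Odd (n + 2) := by
          rw [Nat.even_iff] at he; rw [Nat.odd_iff]; omega
        have h2 : Odd (n + 2 + 2) := by
          rw [Nat.odd_iff] at h1 ⊢; omega
        rw [if_pos he] at hq3
        rw [if_pos h2] at hl4
        rw [if_pos h1] at hlm
        rw [show n + 1 + 2 = n + 3 from rfl] at hq3
        rw [hq3, hl4]
        linear_combination a * ih1 + ih - hlm
      · have h1 : ¬ Odd (n + 2) := by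
          rw [Nat.odd_iff] at ho ⊢; omega
        have h2 : ¬ Odd (n + 2 + 2) := by
          rw [Nat.odd_iff] at ho ⊢; omega
        have hne : ¬ Even (n + 3) := by rw [Nat.even_iff]; rw [Nat.odd_iff] at ho; omega
        rw [if_neg hne] at hq3
        rw [if_neg h2] at hl4
        rw [if_neg h1] at hlm
        rw [hq3, hl4]
        linear_combination b * ih1 + ih - hlm
  intro n hn
  rcases n with _ | m
  · omega
  · simpa using key m
end

section
/- For every natural number n, the n-th term of the bi-periodic Fibonacci matrix sequence equals the 2×2 matrix with entries [[(b/a)^{ε(n)}·q_{n+1}, (b/a)·q_n], [q_n, (b/a)^{ε(n)}·q_{n-1}]], where ε(n) = 1 if n is odd and 0 if n is even (interpreting q_{-1} = 1 for n = 0). -/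
theorem stmt_2 (a b : ℝ) (ha : a ≠ 0) (hb : b ≠ 0)
  (q : ℕ → ℝ) (hq0 : q 0 = 0) (hq1 : q 1 = 1)
  (hq : ∀ n : ℕ, q (n + 2) = if Even (n + 2) then a * q (n + 1) + q n else b * q (n + 1) + q n)
  (F : ℕ → Matrix (Fin 2) (Fin 2) ℝ) (hF0 : F 0 = 1) (hF1 : F 1 = !![b, b/a; 1, 0])
  (hF : ∀ n : ℕ, F (n + 2) = if Even (n + 2) then a • F (n + 1) + F n else b • F (n + 1) + F n) :
    ∀ n : ℕ, F n = !![(b/a) ^ (if Odd n then 1 else 0) * q (n + 1), (b/a) * q n; q n, (b/a) ^ (if Odd n then 1 else 0) * (if n = 0 then 1 else q (n - 1))] := by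
  intro n
  induction n using Nat.twoStepInduction with
  | zero =>
    simp [hF0, hq0, hq1]
    ext i j
    fin_cases i <;> fin_cases j <;> simp [Matrix.one_apply]
  | one =>
    have h2 : q 2 = a := by have := hq 0; simp at this; simp [this, hq0, hq1]
    rw [hF1]
    ext i j
    fin_cases i <;> fin_cases j <;> simp [hq0, hq1, h2] <;> field_simp
  | more n ih ih1 =>
    have hne : ¬ (n + 2 = 0) := by omega
    have hne1 : ¬ (n + 1 = 0) := by omega
    rcases Nat.even_or_odd n with he | ho
    · have hE2 : Even (n + 2) := he.add even_two
      have hO1 : Odd (n + 1) := he.add_one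
      have hO3 : Odd (n + 3) := hE2.add_one
      have hnO : ¬ Odd n := Nat.not_odd_iff_even.mpr he
      have hnO2 : ¬ Odd (n + 2) := Nat.not_odd_iff_even.mpr hE2
      have hq2 : q (n + 2) = a * q (n + 1) + q n := by rw [hq n, if_pos hE2]
      have hq3 : q (n + 3) = b * q (n + 2) + q (n + 1) := by
        have h := hq (n + 1); rwa [if_neg (Nat.not_even_iff_odd.mpr hO3)] at h
      rw [hF n, if_pos hE2, ih, ih1]
      simp only [if_pos hO1, if_neg hnO2, if_neg hnO, if_neg hne1, if_neg hne,
        Nat.add_sub_cancel]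
      rcases Nat.eq_zero_or_pos n with rfl | hpos
      · ext i j
        fin_cases i <;> fin_cases j <;> simp [hq2, hq3, hq0, hq1] <;> field_simp <;> ring
      · obtain ⟨m, rfl⟩ : ∃ m, n = m + 1 := ⟨n - 1, by omega⟩
        have hm : Odd m := Nat.not_even_iff_odd.mp (Nat.even_add_one.mp he)
        have hOm2 : Odd (m + 2) := hm.add_even even_two
        have hqm : q (m + 2) = b * q (m + 1) + q m := by
          rw [hq m, if_neg (Nat.not_even_iff_odd.mpr hOm2)]
        simp only [if_neg (by omega : ¬ (m + 1 = 0)), Nat.add_sub_cancel]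
        ext i j
        fin_cases i <;> fin_cases j <;>
          simp [show m+1+2 = m+3 from rfl, show m+1+1 = m+2 from rfl, hq2, hq3, hqm] <;>
          field_simp <;> ring
    · have hO2 : Odd (n + 2) := ho.add_even even_two
      have hE1 : Even (n + 1) := ho.add_one
      have hE3 : Even (n + 3) := hO2.add_one
      have hO : Odd n := ho
      have hnE : ¬ Odd (n + 1) := Nat.not_odd_iff_even.mpr hE1
      have hq2 : q (n + 2) = b * q (n + 1) + q n := by
        rw [hq n, if_neg (Nat.not_even_iff_odd.mpr hO2)]
      have hq3 : q (n + 3) = a * q (n + 2) + q (n + 1) := by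
        have h := hq (n + 1); rwa [if_pos hE3] at h
      have hpos : 1 ≤ n := ho.pos
      obtain ⟨m, rfl⟩ : ∃ m, n = m + 1 := ⟨n - 1, by omega⟩
      have hEm2 : Even (m + 2) := (Nat.not_odd_iff_even.mp (Nat.odd_add_one.mp ho)).add even_two
      have hqm : q (m + 2) = a * q (m + 1) + q m := by rw [hq m, if_pos hEm2]
      rw [hF (m + 1), if_neg (Nat.not_even_iff_odd.mpr hO2), ih, ih1]
      simp only [if_pos hO, if_pos hO2, if_neg hnE, if_neg hne1, if_neg hne,
        if_neg (by omega : ¬ (m + 1 = 0)), Nat.add_sub_cancel]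
      ext i j
      fin_cases i <;> fin_cases j <;>
        simp [show m+1+2 = m+3 from rfl, show m+1+1 = m+2 from rfl, show m+1+3 = m+4 from rfl,
          hq2, hq3, hqm] <;>
        field_simp <;> ring
end

section
/- For every natural number n, the n-th term L_n of the bi-periodic Lucas matrix sequence equals the 2×2 matrix [[(a/b)^{ε(n)}·l_{n+1}, l_n], [(a/b)·l_n, (a/b)^{ε(n)}·l_{n-1}]], where ε(n) = 1 if n is odd and 0 if n is even, and where for n = 0 the (2,2) entry of L_0 is taken to be -a. -/
theorem stmt_3 (a b : ℝ) (ha : a ≠ 0) (hb : b ≠ 0)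
  (l : ℕ → ℝ) (hl0 : l 0 = 2) (hl1 : l 1 = a)
  (hl : ∀ n : ℕ, l (n + 2) = if Odd (n + 2) then a * l (n + 1) + l n else b * l (n + 1) + l n)
  (L : ℕ → Matrix (Fin 2) (Fin 2) ℝ) (hL0 : L 0 = !![a, 2; 2*a/b, -a])
  (hL1 : L 1 = !![a^2 + 2*a/b, a; a^2/b, 2*a/b])
  (hL : ∀ n : ℕ, L (n + 2) = if Odd (n + 2) then a • L (n + 1) + L n else b • L (n + 1) + L n) :
    ∀ n : ℕ, L n = !![(a/b) ^ (if Odd n then 1 else 0) * l (n + 1), l n; (a/b) * l n, (a/b) ^ (if Odd n then 1 else 0) * (if n = 0 then -a else l (n - 1))] := by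
  intro n
  induction n using Nat.twoStepInduction with
  | zero =>
      rw [hL0]
      ext i j
      fin_cases i <;> fin_cases j <;> norm_num [hl0, hl1] <;> ring
  | one =>
      have h2 : l 2 = b * a + 2 := by
        have := hl 0
        norm_num [Nat.odd_iff, hl0, hl1] at this
        linarith
      rw [hL1]
      ext i j
      fin_cases i <;> fin_cases j <;>
        norm_num [Nat.odd_iff, hl0, hl1, h2] <;> field_simp <;> ring
  | more n ih ih1 =>
      rcases Nat.even_or_odd n with he | ho
      · -- n even : n+2 even, n+1 odd
        have hne : ¬ Odd n := Nat.not_odd_iff_even.mpr he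
        have hn2 : ¬ Odd (n + 2) := by
          simp [Nat.odd_iff, Nat.even_iff] at hne ⊢; omega
        have hn1 : Odd (n + 1) := by
          simp [Nat.odd_iff, Nat.even_iff] at hne ⊢; omega
        have hA : l (n + 2) = b * l (n + 1) + l n := by rw [hl n, if_neg hn2]
        have hB : l (n + 3) = a * l (n + 2) + l (n + 1) := by
          have := hl (n + 1)
          rw [if_pos (by simp [Nat.odd_iff, Nat.even_iff] at hne ⊢; omega : Odd (n+1+2))] at this
          simpa using this
        have hC : l (n + 1) = a * l n + (if n = 0 then -a else l (n - 1)) := by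
          rcases n with _ | m
          · simp [hl0, hl1]; ring
          · rw [if_neg (by omega : ¬ m + 1 = 0)]
            have := hl m
            rw [if_pos (by simp [Nat.odd_iff, Nat.even_iff] at hne ⊢; omega : Odd (m + 2))] at this
            simpa using this
        rw [hL n, if_neg hn2, ih, ih1]
        simp only [if_pos hn1, if_neg hne, if_neg hn2, if_neg (by omega : ¬ n + 2 = 0),
          if_neg (by omega : ¬ n + 1 = 0), pow_one, pow_zero, one_mul,
          Nat.add_sub_cancel, Nat.succ_sub_one]
        ext i j
        fin_cases i <;> fin_cases j <;>
          simp [Matrix.add_apply, Matrix.smul_apply, show n+1+1 = n+2 from rfl,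
            show n+2+1 = n+3 from rfl]
        all_goals first
          | (rw [hA]; done)
          | (rw [hA]; ring; done)
          | (rw [hA]; field_simp; (try ring1); done)
          | (rw [hB]; field_simp; (try ring1); done)
          | (rw [hC]; field_simp; (try ring1); done)
          | (field_simp [hA, hB, hC]; (try ring1); done)
      · -- n odd : n+2 odd, n+1 even
        have hn0 : n ≠ 0 := by rcases ho with ⟨k, rfl⟩; omega
        have hn2 : Odd (n + 2) := by simp [Nat.odd_iff] at ho ⊢; omega
        have hn1 : ¬ Odd (n + 1) := by simp [Nat.odd_iff] at ho ⊢; omega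
        have hA : l (n + 2) = a * l (n + 1) + l n := by rw [hl n, if_pos hn2]
        have hB : l (n + 3) = b * l (n + 2) + l (n + 1) := by
          have := hl (n + 1)
          rw [if_neg (by simp [Nat.odd_iff] at ho ⊢; omega : ¬ Odd (n+1+2))] at this
          simpa using this
        have hD : l (n + 1) = b * l n + l (n - 1) := by
          rcases Nat.exists_eq_add_of_le (Nat.one_le_iff_ne_zero.mpr hn0) with ⟨m, rfl⟩
          have := hl m
          rw [if_neg (by simp [Nat.odd_iff] at ho ⊢; omega : ¬ Odd (m + 2))] at this
          simpa [Nat.add_comm 1 m] using this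
        rw [hL n, if_pos hn2, ih, ih1]
        simp only [if_pos hn2, if_pos ho, if_neg hn1, if_neg (by omega : ¬ n + 2 = 0),
          if_neg (by omega : ¬ n + 1 = 0), if_neg hn0, pow_one, pow_zero, one_mul,
          Nat.add_sub_cancel, Nat.succ_sub_one]
        ext i j
        fin_cases i <;> fin_cases j <;>
          simp [Matrix.add_apply, Matrix.smul_apply, show n+1+1 = n+2 from rfl,
            show n+2+1 = n+3 from rfl]
        all_goals first
          | (rw [hA]; done)
          | (rw [hA]; ring; done)
          | (rw [hB]; field_simp; (try ring1); done)
          | (rw [hD]; field_simp; (try ring1); done)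
          | (field_simp [hA, hB, hD]; (try ring1); done)
end

section
/- For every natural number n, the determinant of the n-th bi-periodic Lucas matrix L_n equals (ab + 4)·(−a/b)^{1+ε(n)}, where ε(n) = 1 if n is odd and 0 if n is even. -/
theorem stmt_4 (a b : ℝ) (ha : a ≠ 0) (hb : b ≠ 0)
  (L : ℕ → Matrix (Fin 2) (Fin 2) ℝ) (hL0 : L 0 = !![a, 2; 2*a/b, -a])
  (hL1 : L 1 = !![a^2 + 2*a/b, a; a^2/b, 2*a/b])
  (hL : ∀ n : ℕ, L (n + 2) = if Odd (n + 2) then a • L (n + 1) + L n else b • L (n + 1) + L n) :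
    ∀ n : ℕ, (L n).det = (a * b + 4) * (-(a/b)) ^ (1 + (if Odd n then 1 else 0)) := by
  have hpar : ∀ n : ℕ, Odd (n + 2) ↔ Odd n := by
    intro n; rw [Nat.odd_iff, Nat.odd_iff]; omega
  have hrec : ∀ n : ℕ, ∀ i j : Fin 2,
      L (n + 2) i j = (if Odd n then a else b) * L (n + 1) i j + L n i j := by
    intro n i j
    rw [hL n]
    by_cases h : Odd n
    · simp [h, (hpar n).mpr h, Matrix.add_apply, Matrix.smul_apply, smul_eq_mul]
    · have h2 : ¬ Odd (n + 2) := fun hh => h ((hpar n).mp hh)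
      simp [h, h2, Matrix.add_apply, Matrix.smul_apply, smul_eq_mul]
  set c : ℕ → ℝ := fun n => if Odd n then 1 else a / b with hc
  -- row invariant
  have hR : ∀ n : ℕ, ∀ j : Fin 2, L (n+1) 1 j = c n * L n 0 j := by
    intro n
    induction n using Nat.strong_induction_on with
    | _ n ih =>
      match n with
      | 0 =>
        intro j
        rw [hL1, hL0]
        fin_cases j <;> norm_num [hc, Nat.odd_iff] <;> (field_simp)
      | 1 =>
        intro j
        rw [hrec 0 1 j, hL1, hL0]
        fin_cases j <;> norm_num [hc, Nat.odd_iff] <;> (field_simp; try ring)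
      | (k+2) =>
        intro j
        have e1 : k + 2 + 1 = k + 1 + 2 := by omega
        have e2 : k + 1 + 1 = k + 2 := by omega
        rw [e1, hrec (k+1) 1 j, e2, ih (k+1) (by omega) j, ih k (by omega) j,
          hrec k 0 j]
        have h1 : Odd (k+1) ↔ ¬ Odd k := by rw [Nat.odd_iff, Nat.odd_iff]; omega
        have h2 : Odd (k+2) ↔ Odd k := hpar k
        rcases Nat.even_or_odd k with h | h
        · have hk : ¬ Odd k := Nat.not_odd_iff_even.mpr h
          have hk1 : Odd (k+1) := h1.mpr hk
          have hk2 : ¬ Odd (k+2) := fun hh => hk (h2.mp hh)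
          simp only [hc, if_pos hk1, if_neg hk, if_neg hk2]
          field_simp
        · have hk1 : ¬ Odd (k+1) := fun hh => (h1.mp hh) h
          have hk2 : Odd (k+2) := h2.mpr h
          simp only [hc, if_pos h, if_neg hk1, if_pos hk2]
          field_simp; try ring
  -- Wronskian
  have hW : ∀ n : ℕ, L (n+1) 0 0 * L n 0 1 - L (n+1) 0 1 * L n 0 0
      = (-1 : ℝ)^n * (a/b) * (a*b + 4) := by
    intro n
    induction n with
    | zero =>
      rw [hL1, hL0]
      norm_num
      field_simp; ring
    | succ k ih =>
      rw [hrec k 0 0, hrec k 0 1, pow_succ]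
      linear_combination -ih
  intro n
  match n with
  | 0 =>
    rw [hL0, Matrix.det_fin_two_of]
    norm_num [Nat.odd_iff]
    field_simp; ring
  | Nat.succ m =>
    rw [Matrix.det_fin_two, hR m 1, hR m 0]
    have hw := hW m
    have h1 : Odd (m+1) ↔ ¬ Odd m := by rw [Nat.odd_iff, Nat.odd_iff]; omega
    rcases Nat.even_or_odd m with h | h
    · have hm : ¬ Odd m := Nat.not_odd_iff_even.mpr h
      have hm1 : Odd (m+1) := h1.mpr hm
      rw [h.neg_one_pow] at hw
      simp only [hc, if_neg hm, if_pos hm1]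
      norm_num
      linear_combination (a/b) * hw
    · have hm1 : ¬ Odd (m+1) := fun hh => (h1.mp hh) h
      rw [h.neg_one_pow] at hw
      simp only [hc, if_pos h, if_neg hm1]
      norm_num
      linear_combination hw
end

section
/- For every integer n ≥ 1, (b/a)^{ε(n+1)}·l_{n+1}·l_{n-1} − (b/a)^{ε(n)}·l_n² = (ab + 4)·(−1)^{n+1} (Cassini identity for bi-periodic Lucas numbers), where ε(n) = 1 if n is odd and 0 if n is even. -/
theorem stmt_5 (a b : ℝ) (ha : a ≠ 0) (hb : b ≠ 0)
  (l : ℕ → ℝ) (hl0 : l 0 = 2) (hl1 : l 1 = a)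
  (hl : ∀ n : ℕ, l (n + 2) = if Odd (n + 2) then a * l (n + 1) + l n else b * l (n + 1) + l n) :
    ∀ n : ℕ, 1 ≤ n → (b/a) ^ (if Odd (n+1) then 1 else 0) * l (n + 1) * l (n - 1) - (b/a) ^ (if Odd n then 1 else 0) * (l n)^2 = (a * b + 4) * (-1 : ℝ) ^ (n + 1) := by
  suffices h : ∀ m : ℕ, (b/a) ^ (if Odd (m+2) then 1 else 0) * l (m + 2) * l m - (b/a) ^ (if Odd (m+1) then 1 else 0) * (l (m+1))^2 = (a * b + 4) * (-1 : ℝ) ^ (m + 2) by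
    intro n hn
    obtain ⟨m, rfl⟩ : ∃ m, n = m + 1 := ⟨n - 1, (Nat.succ_pred_eq_of_pos hn).symm⟩
    simpa using h m
  intro m
  induction m with
  | zero =>
    have h2 := hl 0
    norm_num [Nat.odd_iff] at h2 ⊢
    rw [h2, hl0, hl1]
    field_simp
    ring
  | succ m ih =>
    have h3 := hl (m + 1)
    have h2 := hl m
    simp only [show m + 1 + 2 = m + 3 from rfl, show m + 1 + 1 = m + 2 from rfl] at h3 ⊢
    rcases Nat.even_or_odd m with he | ho
    · have ho3 : Odd (m + 3) := by
        rcases he with ⟨k, hk⟩; exact ⟨k + 1, by omega⟩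
      have he2 : ¬ Odd (m + 2) := by
        rcases he with ⟨k, hk⟩; simp [Nat.odd_iff]; omega
      have ho1 : Odd (m + 1) := by
        rcases he with ⟨k, hk⟩; exact ⟨k, by omega⟩
      rw [if_pos ho3] at h3
      rw [if_neg he2] at h2
      have hp : (-1 : ℝ) ^ (m + 2) = 1 := Even.neg_one_pow (by rcases he with ⟨k, hk⟩; exact ⟨k + 1, by omega⟩)
      rw [if_neg he2, if_pos ho1, h2, hp] at ih
      rw [if_pos ho3, if_neg he2, h3, h2, show ((-1:ℝ))^(m+3) = (-1)^(m+2) * (-1) from pow_succ _ _, hp]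
      field_simp at ih ⊢
      linear_combination (-1 : ℝ) * ih
    · have he3 : ¬ Odd (m + 3) := by
        rcases ho with ⟨k, hk⟩; simp [Nat.odd_iff]; omega
      have ho2 : Odd (m + 2) := by
        rcases ho with ⟨k, hk⟩; exact ⟨k + 1, by omega⟩
      have he1 : ¬ Odd (m + 1) := by
        rcases ho with ⟨k, hk⟩; simp [Nat.odd_iff]; omega
      rw [if_neg he3] at h3
      rw [if_pos ho2] at h2
      have hp : (-1 : ℝ) ^ (m + 2) = -1 := Odd.neg_one_pow (by rcases ho with ⟨k, hk⟩; exact ⟨k + 1, by omega⟩)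
      rw [if_pos ho2, if_neg he1, h2, hp] at ih
      rw [if_neg he3, if_pos ho2, h3, h2, show ((-1:ℝ))^(m+3) = (-1)^(m+2) * (-1) from pow_succ _ _, hp]
      field_simp at ih ⊢
      linear_combination (-1 : ℝ) * ih
end

section
/- For every natural number n, L_0·F_n = (b/a)^{ε(n)}·L_n, where F is the bi-periodic Fibonacci matrix sequence, L is the bi-periodic Lucas matrix sequence, and ε(n) = 1 if n is odd, 0 if n is even. -/
/-!
Left multiplication by `L 0` is linear, so `n ↦ L 0 * F n` satisfies the Fibonacci recurrence
(`a` at even steps, `b` at odd ones). Rescaling the odd-indexed Lucas matrices by `b / a` turns the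
Lucas recurrence (`a` at odd steps, `b` at even ones) into that same recurrence. Both sequences
agree at `n = 0, 1`, hence everywhere.
-/

section Biperiodic

variable {R M N : Type*}

def IsBiperiodic [Semiring R] [AddCommMonoid M] [Module R M] (a b : R) (F : ℕ → M) : Prop :=
  ∀ n : ℕ, F (n + 2) = if Even (n + 2) then a • F (n + 1) + F n else b • F (n + 1) + F n

namespace IsBiperiodic

variable [Semiring R] [AddCommMonoid M] [Module R M] {a b : R} {F G : ℕ → M}

theorem ext (hF : IsBiperiodic a b F) (hG : IsBiperiodic a b G) (h0 : F 0 = G 0)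
    (h1 : F 1 = G 1) : F = G := by
  funext n
  induction n using Nat.twoStepInduction with
  | zero => exact h0
  | one => exact h1
  | more n ih0 ih1 => rw [hF, hG, ih0, ih1]

theorem map [AddCommMonoid N] [Module R N] (hF : IsBiperiodic a b F) (T : M →ₗ[R] N) :
    IsBiperiodic a b (T ∘ F) := by
  intro n
  simp only [Function.comp_apply, hF n]
  split_ifs <;> simp only [map_add, map_smul]

end IsBiperiodic

theorem isBiperiodic_odd_smul [Field R] [AddCommGroup M] [Module R M] {a b : R} (ha : a ≠ 0)
    {L : ℕ → M}
    (hL : ∀ n : ℕ, L (n + 2) = if Odd (n + 2) then a • L (n + 1) + L n else b • L (n + 1) + L n) :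
    IsBiperiodic a b (fun n ↦ (b / a) ^ (if Odd n then 1 else 0) • L n) := by
  intro n
  rcases Nat.even_or_odd n with hn | hn
  · have hn1 : Odd (n + 1) := hn.add_one
    have hn2 : Even (n + 2) := hn.add (by decide)
    simp only [hL n, hn1, hn2, Nat.not_odd_iff_even.mpr hn, Nat.not_odd_iff_even.mpr hn2,
      if_true, if_false, pow_zero, pow_one, one_smul, smul_smul, mul_div_cancel₀ _ ha]
  · have hn1 : Even (n + 1) := hn.add_one
    have hn2 : Odd (n + 2) := hn.add_even (by decide)
    simp only [hL n, hn, hn2, Nat.not_odd_iff_even.mpr hn1, Nat.not_even_iff_odd.mpr hn2,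
      if_true, if_false, pow_zero, pow_one, one_smul, smul_add, smul_smul, div_mul_cancel₀ _ ha]

end Biperiodic

theorem stmt_8 (a b : ℝ) (ha : a ≠ 0) (hb : b ≠ 0)
  (F : ℕ → Matrix (Fin 2) (Fin 2) ℝ) (hF0 : F 0 = 1) (hF1 : F 1 = !![b, b/a; 1, 0])
  (hF : ∀ n : ℕ, F (n + 2) = if Even (n + 2) then a • F (n + 1) + F n else b • F (n + 1) + F n)
  (L : ℕ → Matrix (Fin 2) (Fin 2) ℝ) (hL0 : L 0 = !![a, 2; 2*a/b, -a])
  (hL1 : L 1 = !![a^2 + 2*a/b, a; a^2/b, 2*a/b])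
  (hL : ∀ n : ℕ, L (n + 2) = if Odd (n + 2) then a • L (n + 1) + L n else b • L (n + 1) + L n) :
    ∀ n : ℕ, L 0 * F n = (b/a) ^ (if Odd n then 1 else 0) • L n := by
  have hLF : IsBiperiodic a b (fun n ↦ L 0 * F n) :=
    IsBiperiodic.map hF (LinearMap.mulLeft ℝ (L 0))
  refine congrFun (hLF.ext (isBiperiodic_odd_smul ha hL) (by simp [hF0]) ?_)
  rw [hF1, hL0, hL1]
  ext i j
  fin_cases i <;> fin_cases j <;> (simp; field_simp; try ring)
end

section
/- For every natural number n, F_1·L_n = (b/a)^{ε(n+1)}·L_{n+1}, where ε(n) = 1 if n is odd, 0 if n is even. -/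
/-!
Left multiplication by `F₁` is linear, so `n ↦ F₁ L_n` satisfies the bi-periodic recurrence of
`L`. Shifting that recurrence by one index swaps the roles of `a` and `b`, and rescaling the terms
`L_m` with `m` odd by `b / a` restores it, so `n ↦ (b/a)^ε(n+1) L_{n+1}` satisfies the
same recurrence. Both sequences agree at `n = 0, 1`, hence everywhere.
-/

theorem Nat.seq_eq_of_two_step_rec {α : Type*} (f : ℕ → α → α → α) {u v : ℕ → α}
    (hu : ∀ n, u (n + 2) = f n (u (n + 1)) (u n)) (hv : ∀ n, v (n + 2) = f n (v (n + 1)) (v n))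
    (h0 : u 0 = v 0) (h1 : u 1 = v 1) : u = v := by
  funext n
  induction n using Nat.twoStepInduction with
  | zero => exact h0
  | one => exact h1
  | more n ihn ihn1 => rw [hu, hv, ihn, ihn1]

def IsBiperiodicRec {K M : Type*} [SMul K M] [Add M] (a b : K) (u : ℕ → M) : Prop :=
  ∀ n, u (n + 2) = (if Odd (n + 2) then a else b) • u (n + 1) + u n

namespace IsBiperiodicRec

theorem map {K M N : Type*} [Semiring K] [AddCommMonoid M] [Module K M] [AddCommMonoid N]
    [Module K N] {a b : K} {u : ℕ → M} (hu : IsBiperiodicRec a b u) (f : M →ₗ[K] N) :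
    IsBiperiodicRec a b (f ∘ u) := fun n => by
  simp only [Function.comp_apply, hu n, map_add, map_smul]

theorem shift_smul {K M : Type*} [Field K] [AddCommGroup M] [Module K M] {a b : K} (ha : a ≠ 0)
    {u : ℕ → M} (hu : IsBiperiodicRec a b u) :
    IsBiperiodicRec a b (fun n => (b / a) ^ (if Odd (n + 1) then 1 else 0) • u (n + 1)) := by
  intro n
  rcases Nat.even_or_odd n with hn | hn
  · have h1 : Odd (n + 1) := hn.add_one
    have h2 : ¬ Odd (n + 2) := Nat.not_odd_iff_even.mpr (hn.add even_two)
    have h3 : Odd (n + 1 + 2) := h1.add_even even_two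
    simp only [h1, h2, h3, show n + 2 + 1 = n + 1 + 2 by ring, if_true, if_false, pow_one,
      pow_zero, one_smul, hu (n + 1), smul_add, smul_smul, div_mul_cancel₀ b ha]
  · have h1 : ¬ Odd (n + 1) := Nat.not_odd_iff_even.mpr hn.add_one
    have h2 : Odd (n + 2) := hn.add_even even_two
    have h3 : ¬ Odd (n + 1 + 2) :=
      Nat.not_odd_iff_even.mpr (by rw [add_assoc]; exact hn.add_odd (by decide : Odd 3))
    simp only [h1, h2, h3, show n + 2 + 1 = n + 1 + 2 by ring, if_true, if_false, pow_one,
      pow_zero, one_smul, hu (n + 1), smul_smul, mul_div_cancel₀ b ha]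

end IsBiperiodicRec

theorem stmt_10_general (a b : ℝ) (ha : a ≠ 0) (hb : b ≠ 0)
  (F : ℕ → Matrix (Fin 2) (Fin 2) ℝ) (hF1 : F 1 = !![b, b/a; 1, 0])
  (L : ℕ → Matrix (Fin 2) (Fin 2) ℝ) (hL0 : L 0 = !![a, 2; 2*a/b, -a])
  (hL1 : L 1 = !![a^2 + 2*a/b, a; a^2/b, 2*a/b])
  (hL : ∀ n : ℕ, L (n + 2) = if Odd (n + 2) then a • L (n + 1) + L n else b • L (n + 1) + L n) :
    ∀ n : ℕ, F 1 * L n = (b/a) ^ (if Odd (n+1) then 1 else 0) • L (n + 1) := by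
  have hrec : IsBiperiodicRec a b L := fun n => by rw [hL n]; split_ifs <;> rfl
  have h0 : F 1 * L 0 = (b / a) • L 1 := by
    rw [hF1, hL0, hL1]
    ext i j
    fin_cases i <;> fin_cases j <;> simp [Matrix.mul_apply, Fin.sum_univ_two] <;> field_simp
    norm_num
  have h1 : F 1 * L 1 = b • L 1 + L 0 := by
    rw [hF1, hL0, hL1]
    ext i j
    fin_cases i <;> fin_cases j <;> simp [Matrix.mul_apply, Fin.sum_univ_two] <;> field_simp
    norm_num
  refine congrFun (Nat.seq_eq_of_two_step_rec (fun n x y => (if Odd (n + 2) then a else b) • x + y)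
    (hrec.map (LinearMap.mulLeft ℝ (F 1))) (hrec.shift_smul ha) ?_ ?_)
  · simpa using h0
  · simpa [hrec 0, Nat.odd_iff] using h1

theorem stmt_10 (a b : ℝ) (ha : a ≠ 0) (hb : b ≠ 0)
  (F : ℕ → Matrix (Fin 2) (Fin 2) ℝ) (hF0 : F 0 = 1) (hF1 : F 1 = !![b, b/a; 1, 0])
  (hF : ∀ n : ℕ, F (n + 2) = if Even (n + 2) then a • F (n + 1) + F n else b • F (n + 1) + F n)
  (L : ℕ → Matrix (Fin 2) (Fin 2) ℝ) (hL0 : L 0 = !![a, 2; 2*a/b, -a])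
  (hL1 : L 1 = !![a^2 + 2*a/b, a; a^2/b, 2*a/b])
  (hL : ∀ n : ℕ, L (n + 2) = if Odd (n + 2) then a • L (n + 1) + L n else b • L (n + 1) + L n) :
    ∀ n : ℕ, F 1 * L n = (b/a) ^ (if Odd (n+1) then 1 else 0) • L (n + 1) :=
  stmt_10_general a b ha hb F hF1 L hL0 hL1 hL
end

section
/- For all natural numbers m and n, F_m·F_n = (b/a)^{ε(mn)}·F_{m+n}, where ε(k) = 1 if k is odd, 0 if k is even. -/
theorem stmt_11 (a b : ℝ) (ha : a ≠ 0) (hb : b ≠ 0)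
  (F : ℕ → Matrix (Fin 2) (Fin 2) ℝ) (hF0 : F 0 = 1) (hF1 : F 1 = !![b, b/a; 1, 0])
  (hF : ∀ n : ℕ, F (n + 2) = if Even (n + 2) then a • F (n + 1) + F n else b • F (n + 1) + F n) :
    ∀ m n : ℕ, F m * F n = (b/a) ^ (if Odd (m*n) then 1 else 0) • F (m + n) := by
  have hab : a * (b / a) = b := by field_simp
  have hba : b / a * a = b := by field_simp
  have key1 : ∀ m : ℕ, F m * F 1 = (b/a) ^ (if Odd m then 1 else 0) • F (m + 1) := by
    intro m
    induction m using Nat.twoStepInduction with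
    | zero => simp [hF0]
    | one =>
      have h2 : F 2 = a • F 1 + F 0 := by simpa using hF 0
      rw [hF1, h2, hF1, hF0]
      simp only [if_pos (odd_one)]
      ext i j
      fin_cases i <;> fin_cases j <;>
        simp [Matrix.mul_apply, Fin.sum_univ_two, Matrix.smul_apply, pow_one] <;>
        field_simp <;> ring
    | more m ih ih1 =>
      rcases Nat.even_or_odd m with hm | hm
      · have h1 : Even (m + 2) := hm.add even_two
        have h2 : ¬ Even (m + 1 + 2) := by simp [Nat.even_add_one, h1]
        rw [hF m, if_pos h1, add_mul, smul_mul_assoc, ih1, ih, hF (m+1), if_neg h2]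
        have hom : ¬ Odd m := by simpa using hm
        have hom1 : Odd (m + 1) := by simpa [Nat.odd_add_one] using hm
        have hom2 : ¬ Odd (m + 2) := by simp [Nat.odd_add_one, hom1]
        simp only [if_pos hom1, if_neg hom, if_neg hom2, pow_one, pow_zero, one_smul, one_mul, mul_one,
          smul_smul, hab]
      · have h1 : ¬ Even (m + 2) := by simpa [Nat.even_add_one] using hm
        have h2 : Even (m + 1 + 2) := by simpa [Nat.even_add_one] using h1
        rw [hF m, if_neg h1, add_mul, smul_mul_assoc, ih1, ih, hF (m+1), if_pos h2]
        have hom : Odd m := hm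
        have hom1 : ¬ Odd (m + 1) := by simp [Nat.odd_add_one, hom]
        have hom2 : Odd (m + 2) := by simpa [Nat.odd_add_one] using hom1
        simp only [if_pos hom, if_neg hom1, if_pos hom2, pow_one, pow_zero, one_smul, one_mul, mul_one,
          smul_smul, smul_add, hba]
  intro m n
  induction n using Nat.twoStepInduction with
  | zero => simp [hF0]
  | one =>
    rw [key1 m]
    congr 1
    simp
  | more n ih ih1 =>
    have harr : m + (n + 2) = (m + n) + 2 := by ring
    have harr1 : m + (n + 1) = (m + n) + 1 := by ring
    rcases Nat.even_or_odd n with hn | hn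
    · have h1 : Even (n + 2) := hn.add even_two
      rw [hF n, if_pos h1, mul_add, mul_smul_comm, ih1, ih, harr, hF (m+n), harr1]
      rcases Nat.even_or_odd m with hm | hm
      · have h2 : Even (m + n + 2) := (hm.add hn).add even_two
        rw [if_pos h2]
        have o1 : ¬ Odd (m * n) := by simp [Nat.odd_mul, Nat.not_odd_iff_even, hm]
        have o2 : ¬ Odd (m * (n + 1)) := by simp [Nat.odd_mul, Nat.not_odd_iff_even, hm]
        have o3 : ¬ Odd (m * (n + 2)) := by simp [Nat.odd_mul, Nat.not_odd_iff_even, hm]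
        simp [o1, o2, o3, smul_add]
      · have h2 : ¬ Even (m + n + 2) := Nat.not_even_iff_odd.mpr ((hm.add_even hn).add_even even_two)
        rw [if_neg h2]
        have o1 : ¬ Odd (m * n) := by simp [Nat.odd_mul, Nat.not_odd_iff_even, hn]
        have o2 : Odd (m * (n + 1)) := by
          rw [Nat.odd_mul]; exact ⟨hm, by simpa [Nat.odd_add_one, Nat.not_odd_iff_even] using hn⟩
        have o3 : ¬ Odd (m * (n + 2)) := by
          rw [Nat.odd_mul]
          rintro ⟨-, h⟩
          exact (Nat.not_odd_iff_even.mpr (hn.add even_two)) h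
        simp only [if_pos o2, if_neg o1, if_neg o3, pow_one, pow_zero, one_smul, one_mul, mul_one,
          smul_smul, smul_add, hab]
    · have h1 : ¬ Even (n + 2) := Nat.not_even_iff_odd.mpr (hn.add_even even_two)
      rw [hF n, if_neg h1, mul_add, mul_smul_comm, ih1, ih, harr, hF (m+n), harr1]
      rcases Nat.even_or_odd m with hm | hm
      · have h2 : ¬ Even (m + n + 2) := Nat.not_even_iff_odd.mpr ((hm.add_odd hn).add_even even_two)
        rw [if_neg h2]
        have o1 : ¬ Odd (m * n) := by simp [Nat.odd_mul, Nat.not_odd_iff_even, hm]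
        have o2 : ¬ Odd (m * (n + 1)) := by simp [Nat.odd_mul, Nat.not_odd_iff_even, hm]
        have o3 : ¬ Odd (m * (n + 2)) := by simp [Nat.odd_mul, Nat.not_odd_iff_even, hm]
        simp [o1, o2, o3, smul_add]
      · have h2 : Even (m + n + 2) := (hm.add_odd hn).add even_two
        rw [if_pos h2]
        have o1 : Odd (m * n) := Nat.odd_mul.mpr ⟨hm, hn⟩
        have o2 : ¬ Odd (m * (n + 1)) := by
          simp [Nat.odd_mul, Nat.odd_add_one, Nat.not_odd_iff_even]
          intro _; exact hn
        have o3 : Odd (m * (n + 2)) := by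
          rw [Nat.odd_mul]; exact ⟨hm, by simpa [Nat.odd_add_one, Nat.not_odd_iff_even, Nat.not_even_iff_odd] using hn⟩
        simp only [if_pos o1, if_neg o2, if_pos o3, pow_one, pow_zero, one_smul, one_mul, mul_one,
          smul_smul, smul_add, hba]
end

section
/- For all natural numbers m and n, F_m·L_n = (b/a)^{ε(m)·ε(n+1)}·L_{m+n}, where ε(k) = 1 if k is odd, 0 if k is even. -/
theorem stmt_13 (a b : ℝ) (ha : a ≠ 0) (hb : b ≠ 0)
  (F : ℕ → Matrix (Fin 2) (Fin 2) ℝ) (hF0 : F 0 = 1) (hF1 : F 1 = !![b, b/a; 1, 0])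
  (hF : ∀ n : ℕ, F (n + 2) = if Even (n + 2) then a • F (n + 1) + F n else b • F (n + 1) + F n)
  (L : ℕ → Matrix (Fin 2) (Fin 2) ℝ) (hL0 : L 0 = !![a, 2; 2*a/b, -a])
  (hL1 : L 1 = !![a^2 + 2*a/b, a; a^2/b, 2*a/b])
  (hL : ∀ n : ℕ, L (n + 2) = if Odd (n + 2) then a • L (n + 1) + L n else b • L (n + 1) + L n) :
    ∀ m n : ℕ, F m * L n = (b/a) ^ ((if Odd m then 1 else 0) * (if Odd (n+1) then 1 else 0)) • L (m + n) := by
  have key1 : ∀ n, F 1 * L n = (b/a) ^ (if Odd (n+1) then 1 else 0) • L (n+1) := by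
    intro n
    induction n using Nat.twoStepInduction with
    | zero =>
      rw [hF1, hL0, hL1, if_pos (by decide), pow_one]
      ext i j
      fin_cases i <;> fin_cases j <;>
        (simp [Matrix.mul_apply, Fin.sum_univ_two]; try field_simp; try ring)
    | one =>
      have h2 : L 2 = b • L 1 + L 0 := by rw [hL 0, if_neg (by decide)]
      rw [hF1, if_neg (by decide), pow_zero, one_smul, show (1:ℕ)+1 = 2 from rfl, h2, hL0, hL1]
      ext i j
      fin_cases i <;> fin_cases j <;>
        (simp [Matrix.mul_apply, Fin.sum_univ_two]; try field_simp; try ring)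
    | more n ih ih1 =>
      rw [show n+1+1 = n+2 from rfl] at ih1
      rw [show n+2+1 = n+3 from rfl]
      have h3' := hL (n+1)
      rw [show n+1+2 = n+3 from rfl, show n+1+1 = n+2 from rfl] at h3'
      rcases Nat.even_or_odd n with hn | hn
      · have h1 : ¬ Odd (n+2) := by simp only [Nat.even_iff, Nat.odd_iff] at *; omega
        have h2 : Odd (n+3) := by simp only [Nat.even_iff, Nat.odd_iff] at *; omega
        have h3 : Odd (n+1) := by simp only [Nat.even_iff, Nat.odd_iff] at *; omega
        simp only [hL n, h3', ih, ih1, h1, h2, h3, if_true, if_false, eq_self_iff_true,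
          pow_one, pow_zero, one_smul, mul_add, Matrix.mul_smul, smul_add, smul_smul]
        try (match_scalars <;> (try field_simp) <;> (try ring))
      · have h1 : Odd (n+2) := by simp only [Nat.even_iff, Nat.odd_iff] at *; omega
        have h2 : ¬ Odd (n+3) := by simp only [Nat.even_iff, Nat.odd_iff] at *; omega
        have h3 : ¬ Odd (n+1) := by simp only [Nat.even_iff, Nat.odd_iff] at *; omega
        simp only [hL n, h3', ih, ih1, h1, h2, h3, if_true, if_false, eq_self_iff_true,
          pow_one, pow_zero, one_smul, mul_add, Matrix.mul_smul, smul_add, smul_smul]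
        try (match_scalars <;> (try field_simp) <;> (try ring))
  intro m
  induction m using Nat.twoStepInduction with
  | zero => intro n; simp [hF0]
  | one => intro n; simpa [show (1:ℕ)+n = n+1 by ring] using key1 n
  | more m ih ih1 =>
    intro n
    rw [show m+2+n = m+n+2 by ring]
    have hLrec := hL (m+n)
    have hFrec := hF m
    have e2 : m + 1 + n = m + n + 1 := by ring
    rcases Nat.even_or_odd m with hm | hm <;> rcases Nat.even_or_odd n with hn | hn
    · have c1 : Even (m+2) := by simp only [Nat.even_iff, Nat.odd_iff] at *; omega
      have c2 : ¬ Odd (m+n+2) := by simp only [Nat.even_iff, Nat.odd_iff] at *; omega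
      have c3 : Odd (m+1) := by simp only [Nat.even_iff, Nat.odd_iff] at *; omega
      have c4 : ¬ Odd m := by simp only [Nat.even_iff, Nat.odd_iff] at *; omega
      have c5 : Odd (n+1) := by simp only [Nat.even_iff, Nat.odd_iff] at *; omega
      have c6 : ¬ Odd (m+2) := by simp only [Nat.even_iff, Nat.odd_iff] at *; omega
      simp only [hFrec, hLrec, ih n, ih1 n, e2, c1, c2, c3, c4, c5, c6, if_true, if_false,
        eq_self_iff_true, pow_one, pow_zero, one_mul, zero_mul, mul_one, mul_zero, one_smul,
        add_mul, Matrix.smul_mul, smul_add, smul_smul]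
      try (match_scalars <;> (try field_simp) <;> (try ring))
    · have c1 : Even (m+2) := by simp only [Nat.even_iff, Nat.odd_iff] at *; omega
      have c2 : Odd (m+n+2) := by simp only [Nat.even_iff, Nat.odd_iff] at *; omega
      have c3 : Odd (m+1) := by simp only [Nat.even_iff, Nat.odd_iff] at *; omega
      have c4 : ¬ Odd m := by simp only [Nat.even_iff, Nat.odd_iff] at *; omega
      have c5 : ¬ Odd (n+1) := by simp only [Nat.even_iff, Nat.odd_iff] at *; omega
      have c6 : ¬ Odd (m+2) := by simp only [Nat.even_iff, Nat.odd_iff] at *; omega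
      simp only [hFrec, hLrec, ih n, ih1 n, e2, c1, c2, c3, c4, c5, c6, if_true, if_false,
        eq_self_iff_true, pow_one, pow_zero, one_mul, zero_mul, mul_one, mul_zero, one_smul,
        add_mul, Matrix.smul_mul, smul_add, smul_smul]
      try (match_scalars <;> (try field_simp) <;> (try ring))
    · have c1 : ¬ Even (m+2) := by simp only [Nat.even_iff, Nat.odd_iff] at *; omega
      have c2 : Odd (m+n+2) := by simp only [Nat.even_iff, Nat.odd_iff] at *; omega
      have c3 : ¬ Odd (m+1) := by simp only [Nat.even_iff, Nat.odd_iff] at *; omega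
      have c4 : Odd m := hm
      have c5 : Odd (n+1) := by simp only [Nat.even_iff, Nat.odd_iff] at *; omega
      have c6 : Odd (m+2) := by simp only [Nat.even_iff, Nat.odd_iff] at *; omega
      simp only [hFrec, hLrec, ih n, ih1 n, e2, c1, c2, c3, c4, c5, c6, if_true, if_false,
        eq_self_iff_true, pow_one, pow_zero, one_mul, zero_mul, mul_one, mul_zero, one_smul,
        add_mul, Matrix.smul_mul, smul_add, smul_smul]
      try (match_scalars <;> (try field_simp) <;> (try ring))
    · have c1 : ¬ Even (m+2) := by simp only [Nat.even_iff, Nat.odd_iff] at *; omega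
      have c2 : ¬ Odd (m+n+2) := by simp only [Nat.even_iff, Nat.odd_iff] at *; omega
      have c3 : ¬ Odd (m+1) := by simp only [Nat.even_iff, Nat.odd_iff] at *; omega
      have c4 : Odd m := hm
      have c5 : ¬ Odd (n+1) := by simp only [Nat.even_iff, Nat.odd_iff] at *; omega
      have c6 : Odd (m+2) := by simp only [Nat.even_iff, Nat.odd_iff] at *; omega
      simp only [hFrec, hLrec, ih n, ih1 n, e2, c1, c2, c3, c4, c5, c6, if_true, if_false,
        eq_self_iff_true, pow_one, pow_zero, one_mul, zero_mul, mul_one, mul_zero, one_smul,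
        add_mul, Matrix.smul_mul, smul_add, smul_smul]
      try (match_scalars <;> (try field_simp) <;> (try ring))
end

section
/- For all natural numbers m and n, L_m·L_n = (a/b)^{2 − ε(m+1)·ε(n+1)}·(ab + 4)·F_{m+n}, where ε(k) = 1 if k is odd, 0 if k is even. -/
/-!
Put `q = a / b` and `M = F 1`. By Cayley–Hamilton `q • M ^ 2 = a • M + 1`, and this single
relation makes both parity branches of the recurrences collapse, so that
`F n = q ^ ⌊n/2⌋ • M ^ n` and `L n = q ^ ⌈n/2⌉ • (L 0 * M ^ n)`. Since `L 0` commutes with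
`M` and `L 0 * L 0 = q (ab + 4) • 1`, we get
`L m * L n = q ^ (⌈m/2⌉ + ⌈n/2⌉ + 1) (ab + 4) • M ^ (m + n)`, and the theorem is the
comparison of this power of `q` with `q ^ ⌊(m+n)/2⌋`.
-/

theorem eq_smul_mul_pow_of_biperiodic {K A : Type*} [Field K] [Ring A] [Algebra K A]
    {a b q : K} (hq : q * b = a) {M : A} (hM : q • M ^ 2 = a • M + 1) (C : A) (r : ℕ)
    {X : ℕ → A} (h0 : X 0 = q ^ (r / 2) • C) (h1 : X 1 = q ^ ((r + 1) / 2) • (C * M))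
    (hX : ∀ n, X (n + 2) = (if Even (n + r) then a else b) • X (n + 1) + X n) (n : ℕ) :
    X n = q ^ ((n + r) / 2) • (C * M ^ n) := by
  induction n using Nat.twoStepInduction with
  | zero => simpa using h0
  | one => simpa [add_comm] using h1
  | more n ih0 ih1 =>
    have hMn : q • (C * M ^ n * M ^ 2) = a • (C * M ^ n * M) + C * M ^ n := by
      rw [← mul_smul_comm, hM, mul_add, mul_smul_comm, mul_one]
    rw [hX, ih0, ih1, pow_add M n 2, pow_succ M n, ← mul_assoc, ← mul_assoc]
    obtain ⟨k, hk | hk⟩ := Nat.even_or_odd' (n + r)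
    · rw [if_pos ⟨k, by omega⟩, show (n + 2 + r) / 2 = k + 1 by omega,
        show (n + 1 + r) / 2 = k by omega, show (n + r) / 2 = k by omega]
      linear_combination (norm := module) (-q ^ k) • hMn
    · rw [if_neg (Nat.not_even_iff_odd.mpr ⟨k, hk⟩), show (n + 2 + r) / 2 = k + 1 by omega,
        show (n + 1 + r) / 2 = k + 1 by omega, show (n + r) / 2 = k by omega]
      linear_combination (norm := module) (-q ^ k) • hMn + hq • (q ^ k • (C * M ^ n * M))

theorem mul_pow_mul_mul_pow_of_commute {R A : Type*} [CommSemiring R] [Semiring A] [Algebra R A]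
    {C M : A} {c : R} (hCM : Commute C M) (hC : C * C = c • 1) (m n : ℕ) :
    C * M ^ m * (C * M ^ n) = c • M ^ (m + n) := by
  rw [mul_assoc, ← mul_assoc (M ^ m), ← (hCM.pow_right m).eq, mul_assoc, ← mul_assoc C, hC,
    smul_mul_assoc, one_mul, pow_add]

section
variable {K : Type*} [Field K] {a b : K}

theorem biperiodic_fib_one_sq (ha : a ≠ 0) (hb : b ≠ 0) :
    (a / b) • !![b, b / a; 1, 0] ^ 2 = a • !![b, b / a; 1, 0] + 1 := by
  rw [sq, Matrix.one_fin_two, Matrix.mul_fin_two]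
  ext i j; fin_cases i <;> fin_cases j <;> simp <;> grind

theorem commute_biperiodic_lucas_zero_fib_one (ha : a ≠ 0) (hb : b ≠ 0) :
    Commute !![a, 2; 2 * a / b, -a] !![b, b / a; 1, 0] := by
  rw [Commute, SemiconjBy, Matrix.mul_fin_two, Matrix.mul_fin_two]
  ext i j; fin_cases i <;> fin_cases j <;> simp <;> grind

theorem biperiodic_lucas_zero_mul_self (hb : b ≠ 0) :
    !![a, 2; 2 * a / b, -a] * !![a, 2; 2 * a / b, -a] = (a / b * (a * b + 4)) • 1 := by
  rw [Matrix.one_fin_two, Matrix.mul_fin_two]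
  ext i j; fin_cases i <;> fin_cases j <;> simp <;> grind

theorem biperiodic_lucas_one_eq_smul_lucas_zero_mul_fib_one (hb : b ≠ 0) :
    !![a ^ 2 + 2 * a / b, a; a ^ 2 / b, 2 * a / b]
      = (a / b) • (!![a, 2; 2 * a / b, -a] * !![b, b / a; 1, 0]) := by
  rw [Matrix.mul_fin_two]
  ext i j; fin_cases i <;> fin_cases j <;> simp <;> grind

end

theorem succ_div_two_add_succ_div_two_add_one (m n : ℕ) :
    (m + 1) / 2 + (n + 1) / 2 + 1
    = 2 - (if Odd (m + 1) then 1 else 0) * (if Odd (n + 1) then 1 else 0) + (m + n) / 2 := by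
  simp only [Nat.odd_iff]; split_ifs <;> omega

theorem stmt_14 (a b : ℝ) (ha : a ≠ 0) (hb : b ≠ 0)
  (F : ℕ → Matrix (Fin 2) (Fin 2) ℝ) (hF0 : F 0 = 1) (hF1 : F 1 = !![b, b/a; 1, 0])
  (hF : ∀ n : ℕ, F (n + 2) = if Even (n + 2) then a • F (n + 1) + F n else b • F (n + 1) + F n)
  (L : ℕ → Matrix (Fin 2) (Fin 2) ℝ) (hL0 : L 0 = !![a, 2; 2*a/b, -a])
  (hL1 : L 1 = !![a^2 + 2*a/b, a; a^2/b, 2*a/b])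
  (hL : ∀ n : ℕ, L (n + 2) = if Odd (n + 2) then a • L (n + 1) + L n else b • L (n + 1) + L n) :
    ∀ m n : ℕ, L m * L n = ((a/b) ^ (2 - (if Odd (m+1) then 1 else 0) * (if Odd (n+1) then 1 else 0)) * (a * b + 4)) • F (m + n) := by
  intro m n
  have hq : a / b * b = a := div_mul_cancel₀ a hb
  have hM := biperiodic_fib_one_sq ha hb
  have hF_closed := eq_smul_mul_pow_of_biperiodic hq hM 1 0 (by simpa using hF0)
    (by simpa using hF1) (fun n ↦ by rw [hF, ite_smul, ite_add]; simp [parity_simps])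
  have hL_closed := eq_smul_mul_pow_of_biperiodic hq hM _ 1 (by simpa using hL0)
    (by rw [hL1, biperiodic_lucas_one_eq_smul_lucas_zero_mul_fib_one hb]; simp)
    (fun n ↦ by rw [hL, ite_smul, ite_add]; simp [parity_simps])
  rw [hL_closed, hL_closed, hF_closed, smul_mul_smul, mul_pow_mul_mul_pow_of_commute
    (commute_biperiodic_lucas_zero_fib_one ha hb) (biperiodic_lucas_zero_mul_self hb),
    smul_smul, one_mul, smul_smul]
  congr 1
  rw [← pow_add, ← mul_assoc, ← pow_succ, mul_right_comm _ (a * b + 4), ← pow_add, add_zero,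
    succ_div_two_add_succ_div_two_add_one]
end

section
/- For all natural numbers m and n, the m-th power of F_n satisfies F_n^m = (b/a)^{⌊m/2⌋·ε(n)}·F_{mn}, where ε(n) = 1 if n is odd, 0 if n is even. -/
/-!
Write `ε n = n % 2` and `r = b / a`. The whole argument is the product rule
`F m * F n = r ^ (ε m * ε n) • F (m + n)`: it holds for `m = n = 1` by a direct computation,
and both sides obey the bi-periodic recurrence in either index, so two-step inductions in `m`
and then in `n` extend it to all `m, n`. Iterating it, `F n ^ m` picks up one factor `r` at every second step
when `n` is odd, i.e. `m / 2` of them.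
-/

namespace BiperiodicFibonacci

variable {K R : Type*} [Field K] [Ring R] [Algebra K R]

def coeff (a b : K) (n : ℕ) : K := if Even n then a else b

def IsSolution (a b : K) (F : ℕ → R) : Prop :=
  ∀ n, F (n + 2) = coeff a b n • F (n + 1) + F n

theorem coeff_mul_pow {a : K} (ha : a ≠ 0) (b : K) (m n : ℕ) :
    coeff a b n * (b / a) ^ (m % 2 * ((n + 1) % 2)) =
      (b / a) ^ (m % 2 * (n % 2)) * coeff a b (m + n) := by
  rcases Nat.mod_two_eq_zero_or_one m with hm | hm <;>
    rcases Nat.mod_two_eq_zero_or_one n with hn | hn <;>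
    simp [coeff, Nat.even_iff, Nat.add_mod, hm, hn] <;> field_simp

variable {a b : K} {F : ℕ → R}

theorem mul_add_two_right (ha : a ≠ 0) (hF : IsSolution a b F) {m n : ℕ}
    (h₀ : F m * F n = (b / a) ^ (m % 2 * (n % 2)) • F (m + n))
    (h₁ : F m * F (n + 1) = (b / a) ^ (m % 2 * ((n + 1) % 2)) • F (m + n + 1)) :
    F m * F (n + 2) = (b / a) ^ (m % 2 * ((n + 2) % 2)) • F (m + (n + 2)) := by
  calc F m * F (n + 2)
      = (coeff a b n * (b / a) ^ (m % 2 * ((n + 1) % 2))) • F (m + n + 1)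
          + (b / a) ^ (m % 2 * (n % 2)) • F (m + n) := by
        rw [hF, mul_add, mul_smul_comm, h₀, h₁, smul_smul]
    _ = (b / a) ^ (m % 2 * (n % 2)) • F (m + n + 2) := by
        rw [coeff_mul_pow ha, hF, smul_add, mul_smul]
    _ = (b / a) ^ (m % 2 * ((n + 2) % 2)) • F (m + (n + 2)) := by
        rw [Nat.add_mod_right, add_assoc]

theorem mul_add_two_left (ha : a ≠ 0) (hF : IsSolution a b F) {m n : ℕ}
    (h₀ : F m * F n = (b / a) ^ (m % 2 * (n % 2)) • F (m + n))
    (h₁ : F (m + 1) * F n = (b / a) ^ ((m + 1) % 2 * (n % 2)) • F (m + n + 1)) :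
    F (m + 2) * F n = (b / a) ^ ((m + 2) % 2 * (n % 2)) • F (m + 2 + n) := by
  have hcoeff := coeff_mul_pow ha b n m
  rw [mul_comm (n % 2), mul_comm (n % 2), add_comm n m] at hcoeff
  calc F (m + 2) * F n
      = (coeff a b m * (b / a) ^ ((m + 1) % 2 * (n % 2))) • F (m + n + 1)
          + (b / a) ^ (m % 2 * (n % 2)) • F (m + n) := by
        rw [hF, add_mul, smul_mul_assoc, h₀, h₁, smul_smul]
    _ = (b / a) ^ (m % 2 * (n % 2)) • F (m + n + 2) := by
        rw [hcoeff, hF, smul_add, mul_smul]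
    _ = (b / a) ^ ((m + 2) % 2 * (n % 2)) • F (m + 2 + n) := by
        rw [Nat.add_mod_right, Nat.add_right_comm]

theorem mul_one_right (ha : a ≠ 0) (hF : IsSolution a b F) (hF0 : F 0 = 1)
    (h11 : F 1 * F 1 = (b / a) • F 2) (m : ℕ) :
    F m * F 1 = (b / a) ^ (m % 2 * (1 % 2)) • F (m + 1) := by
  induction m using Nat.twoStepInduction with
  | zero => simp [hF0]
  | one => simpa using h11
  | more m ih₀ ih₁ => exact mul_add_two_left ha hF ih₀ ih₁

theorem mul_eq_pow_smul (ha : a ≠ 0) (hF : IsSolution a b F) (hF0 : F 0 = 1)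
    (h11 : F 1 * F 1 = (b / a) • F 2) (m n : ℕ) :
    F m * F n = (b / a) ^ (m % 2 * (n % 2)) • F (m + n) := by
  induction n using Nat.twoStepInduction with
  | zero => simp [hF0]
  | one => exact mul_one_right ha hF hF0 h11 m
  | more n ih₀ ih₁ => exact mul_add_two_right ha hF ih₀ ih₁

theorem div_two_mul_add_mod_two (m n : ℕ) :
    m / 2 * (n % 2) + m * n % 2 * (n % 2) = (m + 1) / 2 * (n % 2) := by
  rcases Nat.mod_two_eq_zero_or_one n with hn | hn
  · simp [hn]
  · rw [Nat.mul_mod, hn]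
    omega

theorem pow_eq_pow_smul (ha : a ≠ 0) (hF : IsSolution a b F) (hF0 : F 0 = 1)
    (h11 : F 1 * F 1 = (b / a) • F 2) (m n : ℕ) :
    F n ^ m = (b / a) ^ (m / 2 * (n % 2)) • F (m * n) := by
  induction m with
  | zero => simp [hF0]
  | succ m ih =>
    rw [pow_succ, ih, smul_mul_assoc, mul_eq_pow_smul ha hF hF0 h11, smul_smul, ← pow_add,
      div_two_mul_add_mod_two, add_one_mul]

end BiperiodicFibonacci

open BiperiodicFibonacci in
theorem stmt_15_general (a b : ℝ) (ha : a ≠ 0)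
  (F : ℕ → Matrix (Fin 2) (Fin 2) ℝ) (hF0 : F 0 = 1) (hF1 : F 1 = !![b, b/a; 1, 0])
  (hF : ∀ n : ℕ, F (n + 2) = if Even (n + 2) then a • F (n + 1) + F n else b • F (n + 1) + F n) :
    ∀ m n : ℕ, (F n) ^ m = (b/a) ^ ((m / 2) * (if Odd n then 1 else 0)) • F (m * n) := by
  have hSol : IsSolution a b F := fun n ↦ by
    simp only [hF, coeff, Nat.even_add, even_two, iff_true]
    split_ifs <;> rfl
  have h11 : F 1 * F 1 = (b / a) • F 2 := by
    rw [hSol, hF0, hF1]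
    ext i j
    fin_cases i <;> fin_cases j <;> simp [coeff, Matrix.mul_apply, Fin.sum_univ_two] <;> field_simp
  intro m n
  have hε : (if Odd n then 1 else 0) = n % 2 := by
    split_ifs with hn <;> rw [Nat.odd_iff] at hn <;> omega
  rw [hε]
  exact pow_eq_pow_smul ha hSol hF0 h11 m n

theorem stmt_15 (a b : ℝ) (ha : a ≠ 0) (hb : b ≠ 0)
  (F : ℕ → Matrix (Fin 2) (Fin 2) ℝ) (hF0 : F 0 = 1) (hF1 : F 1 = !![b, b/a; 1, 0])
  (hF : ∀ n : ℕ, F (n + 2) = if Even (n + 2) then a • F (n + 1) + F n else b • F (n + 1) + F n) :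
    ∀ m n : ℕ, (F n) ^ m = (b/a) ^ ((m / 2) * (if Odd n then 1 else 0)) • F (m * n) :=
  stmt_15_general a b ha F hF0 hF1 hF
end

section
/- For every natural number m, F_m = (a/b)^{⌊m/2⌋}·F_1^m, where F is the bi-periodic Fibonacci matrix sequence. -/
/-!
The matrix `M = F₁ = !![b, b/a; 1, 0]` satisfies its characteristic equation `M² = b M + (b/a) I`.
Hence `Gₘ = (a/b)^⌊m/2⌋ Mᵐ` obeys the same parity-dependent two-step recurrence as `Fₘ`: after an
even index the extra factor `a/b` turns the coefficient `b` into `a`, and in both cases it cancels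
the `b/a`. Since `G₀ = F₀` and `G₁ = F₁`, the two sequences coincide.
-/

theorem Nat.eq_of_two_step_recurrence {α : Type*} {F G : ℕ → α} (step : ℕ → α → α → α)
    (hF : ∀ n, F (n + 2) = step n (F (n + 1)) (F n))
    (hG : ∀ n, G (n + 2) = step n (G (n + 1)) (G n)) (h0 : F 0 = G 0) (h1 : F 1 = G 1) :
    F = G := by
  suffices h : ∀ n, F n = G n ∧ F (n + 1) = G (n + 1) from funext fun n => (h n).1
  intro n
  induction n with
  | zero => exact ⟨h0, h1⟩
  | succ n ih => exact ⟨ih.2, by rw [hF, hG, ih.1, ih.2]⟩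

theorem Matrix.companion_fin_two_sq {R : Type*} [CommSemiring R] (b c : R) :
    !![b, c; 1, 0] ^ 2 = b • !![b, c; 1, 0] + c • (1 : Matrix (Fin 2) (Fin 2) R) := by
  ext i j
  fin_cases i <;> fin_cases j <;> simp [sq, Matrix.mul_apply, Fin.sum_univ_two]

section Recurrence

variable {R A : Type*} [CommSemiring R] [Semiring A] [Algebra R A] {M : A} {b c : R}

theorem pow_add_two_of_sq_eq (hM : M ^ 2 = b • M + c • 1) (n : ℕ) :
    M ^ (n + 2) = b • M ^ (n + 1) + c • M ^ n := by
  rw [pow_add, hM, mul_add, mul_smul_comm, mul_smul_comm, mul_one, ← pow_succ]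

theorem smul_pow_half_recurrence (hM : M ^ 2 = b • M + c • 1) {a r : R} (hrb : r * b = a)
    (hrc : r * c = 1) (n : ℕ) :
    r ^ ((n + 2) / 2) • M ^ (n + 2) =
      if Even (n + 2) then a • (r ^ ((n + 1) / 2) • M ^ (n + 1)) + r ^ (n / 2) • M ^ n
      else b • (r ^ ((n + 1) / 2) • M ^ (n + 1)) + r ^ (n / 2) • M ^ n := by
  rw [pow_add_two_of_sq_eq hM]
  rcases Nat.even_or_odd n with ⟨k, rfl⟩ | ⟨k, rfl⟩
  · rw [if_pos (by rw [Nat.even_add]; simp), show (k + k + 2) / 2 = k + 1 by omega,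
      show (k + k + 1) / 2 = k by omega, show (k + k) / 2 = k by omega]
    match_scalars
    · rw [← hrb]; ring
    · simp only [mul_one, pow_succ, mul_assoc, hrc]
  · rw [if_neg (by rw [Nat.even_add]; simp), show (2 * k + 1 + 2) / 2 = k + 1 by omega,
      show (2 * k + 1 + 1) / 2 = k + 1 by omega, show (2 * k + 1) / 2 = k by omega]
    match_scalars
    · ring
    · simp only [mul_one, pow_succ, mul_assoc, hrc]

end Recurrence

theorem stmt_16 (a b : ℝ) (ha : a ≠ 0) (hb : b ≠ 0)
  (F : ℕ → Matrix (Fin 2) (Fin 2) ℝ) (hF0 : F 0 = 1) (hF1 : F 1 = !![b, b/a; 1, 0])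
  (hF : ∀ n : ℕ, F (n + 2) = if Even (n + 2) then a • F (n + 1) + F n else b • F (n + 1) + F n) :
    ∀ m : ℕ, F m = (a/b) ^ (m / 2) • (F 1) ^ m := by
  have hM : F 1 ^ 2 = b • F 1 + (b / a) • 1 := hF1 ▸ Matrix.companion_fin_two_sq b (b / a)
  have hG := smul_pow_half_recurrence hM (div_mul_cancel₀ a hb) (by field_simp)
  intro m
  refine congrFun (Nat.eq_of_two_step_recurrence (G := fun m => (a / b) ^ (m / 2) • F 1 ^ m)
    (fun n x y => if Even (n + 2) then a • x + y else b • x + y) hF hG ?_ ?_) m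
  · simp [hF0]
  · simp
end

section
/- For all natural numbers n ≥ r, F_{n−r}·F_{n+r} = (b/a)^{(−1)^n·ε(r)}·F_n², where the exponent (−1)^n·ε(r) is an integer power of the nonzero real b/a and ε(r) = 1 if r is odd, 0 if r is even. -/
theorem stmt_17 (a b : ℝ) (ha : a ≠ 0) (hb : b ≠ 0)
  (F : ℕ → Matrix (Fin 2) (Fin 2) ℝ) (hF0 : F 0 = 1) (hF1 : F 1 = !![b, b/a; 1, 0])
  (hF : ∀ n : ℕ, F (n + 2) = if Even (n + 2) then a • F (n + 1) + F n else b • F (n + 1) + F n) :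
    ∀ n r : ℕ, r ≤ n → F (n - r) * F (n + r) = ((b/a) ^ ((-1 : ℤ) ^ n * (if Odd r then 1 else 0))) • (F n) ^ 2 := by
  set B : Matrix (Fin 2) (Fin 2) ℝ := !![b, b/a; 1, 0] with hBdef
  set M : Matrix (Fin 2) (Fin 2) ℝ := a • B + 1 with hMdef
  have hba : (b / a : ℝ) ≠ 0 := div_ne_zero hb ha
  have hB2 : B * B = (b / a) • M := by
    ext i j
    fin_cases i <;> fin_cases j <;>
      · simp [hBdef, hMdef, Matrix.mul_apply, Fin.sum_univ_two, Matrix.one_apply]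
        try field_simp
        try ring
  have hBM : B * M = M * B := by
    rw [hMdef, mul_add, add_mul, mul_one, one_mul, Matrix.mul_smul, Matrix.smul_mul]
  have hMB : M * B = b • M + B := by
    rw [← hBM, hMdef, mul_add, mul_one, Matrix.mul_smul, hB2, smul_smul,
      mul_div_cancel₀ b ha]
  have hc : ∀ k : ℕ, B * M ^ k = M ^ k * B := fun k => (Commute.pow_right hBM k)
  have prodMB : ∀ i j : ℕ, (M ^ i * B) * (M ^ j * B) = (b / a) • M ^ (i + j + 1) := by
    intro i j
    have h1 : B * (M ^ j * B) = (b / a) • M ^ (j + 1) := by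
      rw [← mul_assoc, hc j, mul_assoc, hB2, Matrix.mul_smul, ← pow_succ]
    rw [mul_assoc, h1, Matrix.mul_smul, ← pow_add, ← Nat.add_assoc]
  have key : ∀ k : ℕ, F (2 * k) = M ^ k ∧ F (2 * k + 1) = M ^ k * B := by
    intro k
    induction k with
    | zero => simp [hF0, hF1]
    | succ k ih =>
      have e1 : F (2 * k + 2) = a • F (2 * k + 1) + F (2 * k) := by
        rw [hF (2 * k), if_pos (by exact ⟨k + 1, by omega⟩)]
      have h2 : F (2 * (k + 1)) = M ^ (k + 1) := by
        have : 2 * (k + 1) = 2 * k + 2 := by omega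
        rw [this, e1, ih.1, ih.2, pow_succ, hMdef, mul_add, mul_one, Matrix.mul_smul]
      refine ⟨h2, ?_⟩
      have e2 : F (2 * k + 3) = b • F (2 * k + 2) + F (2 * k + 1) := by
        rw [show 2 * k + 3 = (2 * k + 1) + 2 from by omega, hF (2 * k + 1),
          if_neg (by simp [Nat.even_iff])]
      have h3 : 2 * (k + 1) + 1 = 2 * k + 3 := by omega
      rw [h3, e2, show 2 * k + 2 = 2 * (k + 1) from by omega, h2, ih.2,
        pow_succ, mul_assoc, hMB, mul_add (M ^ k) (b • M) B, Matrix.mul_smul]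
  intro n r hrn
  rcases Nat.even_or_odd n with ⟨p, hp⟩ | ⟨p, hp⟩ <;>
    rcases Nat.even_or_odd r with ⟨q, hq⟩ | ⟨q, hq⟩
  · -- n even, r even
    have hr : ¬ Odd r := by rw [Nat.odd_iff]; omega
    rw [if_neg hr, mul_zero, zpow_zero, one_smul,
      show n - r = 2 * (p - q) from by omega, show n + r = 2 * (p + q) from by omega,
      show n = 2 * p from by omega, (key _).1, (key _).1, (key _).1,
      ← pow_add, ← pow_mul, show p - q + (p + q) = p * 2 from by omega]
  · -- n even, r odd
    have hr : Odd r := by rw [Nat.odd_iff]; omega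
    have hn1 : (-1 : ℤ) ^ n = 1 := Even.neg_one_pow ⟨p, by omega⟩
    rw [if_pos hr, hn1, one_mul, zpow_one,
      show n - r = 2 * (p - q - 1) + 1 from by omega,
      show n + r = 2 * (p + q) + 1 from by omega,
      show n = 2 * p from by omega, (key _).2, (key _).2, (key _).1,
      prodMB, show p - q - 1 + (p + q) + 1 = p * 2 from by omega, pow_mul]
  · -- n odd, r even
    have hr : ¬ Odd r := by rw [Nat.odd_iff]; omega
    rw [if_neg hr, mul_zero, zpow_zero, one_smul,
      show n - r = 2 * (p - q) + 1 from by omega,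
      show n + r = 2 * (p + q) + 1 from by omega,
      show n = 2 * p + 1 from by omega, (key _).2, (key _).2, (key _).2,
      pow_two, prodMB, prodMB, show p - q + (p + q) = p + p from by omega]
  · -- n odd, r odd
    have hr : Odd r := by rw [Nat.odd_iff]; omega
    have hn1 : (-1 : ℤ) ^ n = -1 := Odd.neg_one_pow ⟨p, by omega⟩
    rw [if_pos hr, hn1, neg_one_mul, zpow_neg_one,
      show n - r = 2 * (p - q) from by omega,
      show n + r = 2 * (p + q + 1) from by omega,
      show n = 2 * p + 1 from by omega, (key _).1, (key _).1, (key _).2,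
      pow_two, prodMB, smul_smul, inv_mul_cancel₀ hba, one_smul, ← pow_add,
      show p - q + (p + q + 1) = p + p + 1 from by omega]
end

section
/- For all natural numbers n ≥ r, L_{n−r}·L_{n+r} = (a/b)^{(−1)^n·ε(r)}·L_n², where the exponent is an integer power of the nonzero real a/b and ε(r) = 1 if r is odd, 0 if r is even. -/
/-!
Write `q = a / b`, `ε k ∈ {0, 1}` for the parity of `k` and `c k` for the coefficient (`a` at odd,
`b` at even indices) of the recurrence. The heart of the matter is the product formula
`L m * L n = q ^ (ε m * ε n) • (L 0 * L (m + n))`: it reduces to the two relations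
`L 1 * L 0 = L 0 * L 1` and `L 1 * L 1 = q • (L 0 * L 2)` checked on the initial matrices, and it
propagates along the recurrence because `c m * q ^ (ε (m + 1) * ε n) = q ^ (ε m * ε n) * c (m + n)`,
which is `b * q = a` in disguise. Applying the formula to `(n - r, n + r)` and to `(n, n)` expresses
both sides through `L 0 * L (2 n)`, and the exponents differ by `(-1) ^ n * ε r`.
-/

def oddIndicator (k : ℕ) : ℤ := if Odd k then 1 else 0

def biperiodicCoeff {K : Type*} (a b : K) (k : ℕ) : K := if Odd k then a else b

@[simp] lemma oddIndicator_one : oddIndicator 1 = 1 := by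
  simp [oddIndicator]

@[simp] lemma oddIndicator_add_two (k : ℕ) : oddIndicator (k + 2) = oddIndicator k := by
  simp [oddIndicator, Nat.odd_add]

@[simp] lemma biperiodicCoeff_add_two {K : Type*} (a b : K) (k : ℕ) :
    biperiodicCoeff a b (k + 2) = biperiodicCoeff a b k := by
  simp [biperiodicCoeff, Nat.odd_add]

lemma oddIndicator_sub_mul_oddIndicator_add {n r : ℕ} (hr : r ≤ n) :
    oddIndicator (n - r) * oddIndicator (n + r)
      = (-1) ^ n * oddIndicator r + oddIndicator n * oddIndicator n := by
  rcases Nat.even_or_odd n with hn | hn <;> rcases Nat.even_or_odd r with hr' | hr' <;>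
    simp [oddIndicator, ← Nat.not_even_iff_odd, Nat.even_sub hr, Nat.even_add, hn, hr',
      hn.neg_one_pow, Nat.not_even_iff_odd.mpr]

lemma biperiodicCoeff_mul_zpow {K : Type*} [Field K] {a b : K} (hb : b ≠ 0) (m n : ℕ) :
    biperiodicCoeff a b m * (a / b) ^ (oddIndicator (m + 1) * oddIndicator n)
      = (a / b) ^ (oddIndicator m * oddIndicator n) * biperiodicCoeff a b (m + n) := by
  rcases Nat.even_or_odd m with hm | hm <;> rcases Nat.even_or_odd n with hn | hn <;>
    simp [oddIndicator, biperiodicCoeff, ← Nat.not_even_iff_odd, Nat.even_add, hm, hn,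
      Nat.not_even_iff_odd.mpr, hb, mul_div_cancel₀]

section Biperiodic

variable {K A : Type*} [Field K] [Ring A] [Algebra K A] {a b : K} {L : ℕ → A}

lemma one_mul_eq_zpow_smul (hb : b ≠ 0)
    (hL : ∀ n, L (n + 2) = biperiodicCoeff a b (n + 2) • L (n + 1) + L n)
    (h10 : L 1 * L 0 = L 0 * L 1) (h11 : L 1 * L 1 = (a / b) • (L 0 * L 2)) (n : ℕ) :
    L 1 * L n = (a / b) ^ oddIndicator n • (L 0 * L (n + 1)) := by
  induction n using Nat.twoStepInduction with
  | zero => simpa [oddIndicator] using h10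
  | one => simpa using h11
  | more n ih₀ ih₁ =>
    have key : biperiodicCoeff a b n * (a / b) ^ oddIndicator (n + 1)
        = (a / b) ^ oddIndicator n * biperiodicCoeff a b (n + 1) := by
      simpa using biperiodicCoeff_mul_zpow hb n 1
    rw [hL n, hL (n + 1), mul_add, mul_smul_comm, ih₀, ih₁, mul_add, mul_smul_comm, smul_add,
      smul_smul, smul_smul, oddIndicator_add_two, biperiodicCoeff_add_two,
      biperiodicCoeff_add_two, key]

lemma mul_eq_zpow_smul (hb : b ≠ 0)
    (hL : ∀ n, L (n + 2) = biperiodicCoeff a b (n + 2) • L (n + 1) + L n)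
    (h10 : L 1 * L 0 = L 0 * L 1) (h11 : L 1 * L 1 = (a / b) • (L 0 * L 2)) (m n : ℕ) :
    L m * L n = (a / b) ^ (oddIndicator m * oddIndicator n) • (L 0 * L (m + n)) := by
  induction m using Nat.twoStepInduction with
  | zero => simp [oddIndicator]
  | one => simpa [add_comm 1 n] using one_mul_eq_zpow_smul hb hL h10 h11 n
  | more m ih₀ ih₁ =>
    rw [hL m, add_mul, smul_mul_assoc, ih₀, ih₁, smul_smul, show m + 2 + n = m + n + 2 by ring,
      hL (m + n), mul_add, mul_smul_comm, smul_add, smul_smul, biperiodicCoeff_add_two,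
      biperiodicCoeff_add_two, oddIndicator_add_two, biperiodicCoeff_mul_zpow hb,
      show m + 1 + n = m + n + 1 by ring]

end Biperiodic

lemma lucasMatrix_one_mul_zero {K : Type*} [Field K] (a b : K) :
    !![a^2 + 2*a/b, a; a^2/b, 2*a/b] * !![a, 2; 2*a/b, -a]
      = !![a, 2; 2*a/b, -a] * !![a^2 + 2*a/b, a; a^2/b, 2*a/b] := by
  simp only [Matrix.mul_fin_two, EmbeddingLike.apply_eq_iff_eq, Matrix.vecCons_inj, and_true]
  refine ⟨⟨?_, ?_⟩, ?_, ?_⟩ <;> ring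

lemma lucasMatrix_one_mul_one {K : Type*} [Field K] {a b : K} (hb : b ≠ 0) :
    !![a^2 + 2*a/b, a; a^2/b, 2*a/b] * !![a^2 + 2*a/b, a; a^2/b, 2*a/b]
      = (a / b) • (!![a, 2; 2*a/b, -a]
          * (b • !![a^2 + 2*a/b, a; a^2/b, 2*a/b] + !![a, 2; 2*a/b, -a])) := by
  simp only [Matrix.smul_of, Matrix.of_add_of, Matrix.smul_cons, Matrix.smul_empty, smul_eq_mul,
    Matrix.cons_add_cons, Matrix.empty_add_empty, Matrix.mul_fin_two,
    EmbeddingLike.apply_eq_iff_eq, Matrix.vecCons_inj, and_true]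
  refine ⟨⟨?_, ?_⟩, ?_, ?_⟩ <;> field_simp <;> ring

theorem stmt_18 (a b : ℝ) (ha : a ≠ 0) (hb : b ≠ 0)
  (L : ℕ → Matrix (Fin 2) (Fin 2) ℝ) (hL0 : L 0 = !![a, 2; 2*a/b, -a])
  (hL1 : L 1 = !![a^2 + 2*a/b, a; a^2/b, 2*a/b])
  (hL : ∀ n : ℕ, L (n + 2) = if Odd (n + 2) then a • L (n + 1) + L n else b • L (n + 1) + L n) :
    ∀ n r : ℕ, r ≤ n → L (n - r) * L (n + r) = ((a/b) ^ ((-1 : ℤ) ^ n * (if Odd r then 1 else 0))) • (L n) ^ 2 := by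
  have hL' : ∀ n, L (n + 2) = biperiodicCoeff a b (n + 2) • L (n + 1) + L n := by
    intro n
    rw [hL n, biperiodicCoeff]
    split_ifs <;> rfl
  have h10 : L 1 * L 0 = L 0 * L 1 := by
    rw [hL0, hL1]
    exact lucasMatrix_one_mul_zero a b
  have h11 : L 1 * L 1 = (a / b) • (L 0 * L 2) := by
    rw [show L 2 = b • L 1 + L 0 by simpa [Nat.odd_iff] using hL 0, hL0, hL1]
    exact lucasMatrix_one_mul_one hb
  have hmul := mul_eq_zpow_smul hb hL' h10 h11
  intro n r hr
  rw [hmul, show n - r + (n + r) = n + n by omega, oddIndicator_sub_mul_oddIndicator_add hr,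
    zpow_add₀ (div_ne_zero ha hb), mul_smul, ← hmul, sq]
  rfl
end

section
/- For every natural number n ≥ 1, the partial sum satisfies ab·(Σ_{k=0}^{n−1} L_k) = b^{ε(n)}·a^{1−ε(n)}·L_n + b^{1−ε(n)}·a^{ε(n)}·L_{n−1} − b·L_1 + ab·L_0 − a·L_0, where ε(n) = 1 if n is odd, 0 if n is even. -/
theorem stmt_19 (a b : ℝ) (ha : a ≠ 0) (hb : b ≠ 0)
  (L : ℕ → Matrix (Fin 2) (Fin 2) ℝ) (hL0 : L 0 = !![a, 2; 2*a/b, -a])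
  (hL1 : L 1 = !![a^2 + 2*a/b, a; a^2/b, 2*a/b])
  (hL : ∀ n : ℕ, L (n + 2) = if Odd (n + 2) then a • L (n + 1) + L n else b • L (n + 1) + L n) :
    ∀ n : ℕ, 1 ≤ n → (a * b) • (∑ k ∈ Finset.range n, L k) =
      (b ^ (if Odd n then 1 else 0) * a ^ (1 - (if Odd n then 1 else 0))) • L n + (b ^ (1 - (if Odd n then 1 else 0)) * a ^ (if Odd n then 1 else 0)) • L (n - 1)
      - b • L 1 + (a * b) • L 0 - a • L 0 := by
  intro n hn
  induction n, hn using Nat.le_induction with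
  | base =>
    simp [Finset.sum_range_one, show Odd 1 by decide]

  | succ n hn ih =>
    have hrec : L (n + 1) = if Odd (n + 1) then a • L n + L (n - 1)
        else b • L n + L (n - 1) := by
      obtain ⟨m, rfl⟩ := Nat.exists_eq_add_of_le hn
      have := hL m
      simpa [Nat.add_comm 1 m, Nat.add_sub_cancel] using this
    rw [Finset.sum_range_succ, smul_add, ih, Nat.add_sub_cancel]
    rcases Nat.even_or_odd n with he | ho
    · have h1 : ¬ Odd n := by simpa using he
      have h2 : Odd (n + 1) := Even.add_one he
      rw [if_pos h2] at hrec
      rw [if_neg h1, if_pos h2, hrec]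
      norm_num
      module
    · have h2 : ¬ Odd (n + 1) := by simp [Nat.odd_add_one, ho]
      rw [if_neg h2] at hrec
      rw [if_pos ho, if_neg h2, hrec]
      norm_num
      module
end
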